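/- The first generalized energy equals the momentum (deep-water case): for every Schwartz function u : ℝ → ℂ and every β ∈ ℝ, ∫_ℝ conj(u(x))·(−i u′(x)) dx + β ∫_ℝ |u(x)|² · (P₊(|u|²))(x) dx = i ∫_ℝ u(x)·conj(u′(x)) dx + (β/2) ∫_ℝ |u(x)|⁴ dx. That is, E₁(u) := ⟨u, L_{u} u⟩ with L_u f = −i f′ + β u P₊(conj(u) f) coincides with the conserved momentum P(u) = ∫ i u ∂_x conj(u) dx + (β/2) ∫ |u|⁴ dx of the CCM equation. -/

import Mathlib

open MeasureTheory Complex Filter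
open scoped FourierTransform Real

noncomputable def FT (f : ℝ → ℂ) (ξ : ℝ) : ℂ :=
  (Real.sqrt (2 * Real.pi))⁻¹ • ∫ x : ℝ, f x * Complex.exp (-(Complex.I * x * ξ))

noncomputable def Pplus (g : ℝ → ℂ) (x : ℝ) : ℂ :=
  (Real.sqrt (2 * Real.pi))⁻¹ • ∫ ξ in Set.Ioi (0 : ℝ), FT g ξ * Complex.exp (Complex.I * x * ξ)

lemma schwartz_temperate (u : SchwartzMap ℝ ℂ) : Function.HasTemperateGrowth ⇑u := by
  refine ⟨u.smooth', fun n => ⟨0, SchwartzMap.seminorm ℝ 0 n u, fun x => ?_⟩⟩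
  simpa using SchwartzMap.le_seminorm ℝ 0 n u x

noncomputable def absSqS (u : SchwartzMap ℝ ℂ) : SchwartzMap ℝ ℂ :=
  SchwartzMap.bilinLeftCLM
    ((ContinuousLinearMap.mul ℝ ℂ).flip.comp Complex.conjCLE.toContinuousLinearMap)
    (schwartz_temperate u) u

lemma absSqS_apply (u : SchwartzMap ℝ ℂ) (x : ℝ) :
    absSqS u x = u x * (starRingEnd ℂ) (u x) := by
  simp only [absSqS, SchwartzMap.bilinLeftCLM, SchwartzMap.mkCLM, SchwartzMap.mkLM]
  rfl

lemma FT_eq (f : ℝ → ℂ) (ξ : ℝ) :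
    FT f ξ = (Real.sqrt (2 * Real.pi))⁻¹ • 𝓕 f (ξ / (2 * Real.pi)) := by
  rw [FT, Real.fourier_real_eq_integral_exp_smul]
  congr 1
  apply integral_congr_ae
  filter_upwards with x
  rw [smul_eq_mul, mul_comm]
  have h1 : (-2 * Real.pi * x * (ξ / (2 * Real.pi))) = -(x * ξ) := by
    field_simp
  rw [h1]
  congr 1
  push_cast
  ring

/-- The Szegő projection in mathlib Fourier-transform terms. -/
lemma Pplus_eq (g : ℝ → ℂ) (x : ℝ) :
    Pplus g x = ∫ η in Set.Ioi (0 : ℝ),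
      𝓕 g η * Complex.exp ((2 * Real.pi * (x * η) : ℝ) * Complex.I) := by
  have hπ : (0:ℝ) < 2 * Real.pi := by positivity
  have key : ∀ ξ : ℝ, FT g ξ * Complex.exp (Complex.I * x * ξ)
      = (Real.sqrt (2 * Real.pi))⁻¹ •
        ((fun η : ℝ => 𝓕 g η * Complex.exp ((2 * Real.pi * (x * η) : ℝ) * Complex.I))
          ((2 * Real.pi)⁻¹ * ξ)) := by
    intro ξ
    rw [FT_eq, smul_mul_assoc]
    congr 2
    · congr 1
      rw [div_eq_inv_mul]
    · have : (2 * Real.pi * (x * ((2 * Real.pi)⁻¹ * ξ)) : ℝ) = x * ξ := by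
        field_simp
      rw [this]
      congr 1
      push_cast
      ring
  rw [Pplus]
  simp_rw [key]
  rw [integral_smul]
  have hc : (∫ a in Set.Ioi (0:ℝ), 𝓕 g ((2 * Real.pi)⁻¹ * a)
        * Complex.exp ((2 * Real.pi * (x * ((2 * Real.pi)⁻¹ * a)) : ℝ) * Complex.I))
      = (2 * Real.pi : ℝ) • ∫ η in Set.Ioi (0:ℝ),
          𝓕 g η * Complex.exp ((2 * Real.pi * (x * η) : ℝ) * Complex.I) := by
    have := integral_comp_mul_left_Ioi
      (fun η : ℝ => 𝓕 g η * Complex.exp ((2 * Real.pi * (x * η) : ℝ) * Complex.I)) 0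
      (by positivity : (0:ℝ) < (2 * Real.pi)⁻¹)
    simp only [mul_zero, inv_inv] at this
    exact this
  rw [hc, smul_smul, smul_smul]
  have : (Real.sqrt (2 * Real.pi))⁻¹ * (Real.sqrt (2 * Real.pi))⁻¹ * (2 * Real.pi) = 1 := by
    have h0 : Real.sqrt (2 * Real.pi) ≠ 0 := by positivity
    rw [← Real.mul_self_sqrt hπ.le]
    field_simp
    rw [Real.sqrt_sq (Real.sqrt_nonneg _)]
  rw [this, one_smul]

/-- Fubini step. -/
lemma fubini_key (g : SchwartzMap ℝ ℂ) (ν : Measure ℝ) [SFinite ν]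
    (hν : Integrable (𝓕 ⇑g) ν) :
    ∫ x : ℝ, g x * ∫ η, 𝓕 ⇑g η * Complex.exp ((2 * Real.pi * (x * η) : ℝ) * Complex.I) ∂ν
      = ∫ η, 𝓕 ⇑g η * 𝓕 ⇑g (-η) ∂ν := by
  have hcont : Continuous (𝓕 ⇑g) := (SchwartzMap.fourierTransformCLM ℂ g).continuous
  have hint : Integrable (Function.uncurry fun x η => g x *
      (𝓕 ⇑g η * Complex.exp ((2 * Real.pi * (x * η) : ℝ) * Complex.I))) (volume.prod ν) := by
    have hmeas : AEStronglyMeasurable (Function.uncurry fun x η => g x *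
        (𝓕 ⇑g η * Complex.exp ((2 * Real.pi * (x * η) : ℝ) * Complex.I))) (volume.prod ν) := by
      apply Continuous.aestronglyMeasurable
      apply Continuous.mul (g.continuous.comp continuous_fst)
      apply Continuous.mul (hcont.comp continuous_snd)
      apply Complex.continuous_exp.comp
      fun_prop
    have hdom : Integrable (fun p : ℝ × ℝ => ‖g p.1‖ * ‖𝓕 ⇑g p.2‖) (volume.prod ν) :=
      (g.integrable.norm).mul_prod hν.norm
    apply hdom.mono' hmeas
    filter_upwards with p
    rw [Function.uncurry]
    simp only [norm_mul]
    have h1 : ‖Complex.exp ((2 * Real.pi * (p.1 * p.2) : ℝ) * Complex.I)‖ = 1 := by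
      simpa using Complex.norm_exp_ofReal_mul_I (2 * Real.pi * (p.1 * p.2))
    rw [h1, mul_one]
  have inner : ∀ η : ℝ, (∫ x : ℝ, g x *
      (𝓕 ⇑g η * Complex.exp ((2 * Real.pi * (x * η) : ℝ) * Complex.I)))
      = 𝓕 ⇑g η * 𝓕 ⇑g (-η) := by
    intro η
    rw [Real.fourier_real_eq_integral_exp_smul (⇑g) (-η), ← integral_const_mul]
    apply integral_congr_ae
    filter_upwards with v
    rw [smul_eq_mul]
    have h2 : (-2 * Real.pi * v * -η : ℝ) = (2 * Real.pi * (v * η) : ℝ) := by ring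
    rw [h2]
    ring
  calc ∫ x : ℝ, g x * ∫ η, 𝓕 ⇑g η * Complex.exp ((2 * Real.pi * (x * η) : ℝ) * Complex.I) ∂ν
      = ∫ x : ℝ, ∫ η, g x *
          (𝓕 ⇑g η * Complex.exp ((2 * Real.pi * (x * η) : ℝ) * Complex.I)) ∂ν := by
        simp_rw [integral_const_mul]
    _ = ∫ η, (∫ x : ℝ, g x *
          (𝓕 ⇑g η * Complex.exp ((2 * Real.pi * (x * η) : ℝ) * Complex.I))) ∂ν :=
        integral_integral_swap hint
    _ = ∫ η, 𝓕 ⇑g η * 𝓕 ⇑g (-η) ∂ν := by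
        apply integral_congr_ae
        filter_upwards with η
        exact inner η

lemma inversion (g : SchwartzMap ℝ ℂ) (x : ℝ) :
    g x = ∫ η : ℝ, 𝓕 ⇑g η * Complex.exp ((2 * Real.pi * (x * η) : ℝ) * Complex.I) := by
  conv_lhs => rw [← Continuous.fourierInv_fourier_eq g.continuous g.integrable
    (SchwartzMap.fourierTransformCLM ℂ g).integrable]
  rw [Real.fourierInv_eq_fourier_neg,
    Real.fourier_real_eq_integral_exp_smul]
  apply integral_congr_ae
  filter_upwards with η
  rw [smul_eq_mul]
  have h2 : (-2 * Real.pi * η * -x : ℝ) = (2 * Real.pi * (x * η) : ℝ) := by ring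
  rw [h2]
  ring

lemma even_split (g : SchwartzMap ℝ ℂ) :
    ∫ η : ℝ, 𝓕 ⇑g η * 𝓕 ⇑g (-η)
      = 2 * ∫ η in Set.Ioi (0 : ℝ), 𝓕 ⇑g η * 𝓕 ⇑g (-η) := by
  have hw : Integrable (𝓕 ⇑g) := (SchwartzMap.fourierTransformCLM ℂ g).integrable
  have hInt : Integrable (fun η : ℝ => 𝓕 ⇑g η * 𝓕 ⇑g (-η)) := by
    apply (hw.comp_neg).bdd_mul ((SchwartzMap.fourierTransformCLM ℂ g).continuous.aestronglyMeasurable)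
    exact ae_of_all _ (fun x => SchwartzMap.norm_le_seminorm ℝ
      (SchwartzMap.fourierTransformCLM ℂ g) x)
  have hsym : (∫ η in Set.Iic (0:ℝ), 𝓕 ⇑g η * 𝓕 ⇑g (-η))
      = ∫ η in Set.Ioi (0:ℝ), 𝓕 ⇑g η * 𝓕 ⇑g (-η) := by
    have h1 : (∫ η in Set.Iic (0:ℝ), 𝓕 ⇑g η * 𝓕 ⇑g (-η))
        = ∫ η in Set.Iic (0:ℝ), 𝓕 ⇑g (-η) * 𝓕 ⇑g (-(-η)) := by
      apply integral_congr_ae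
      filter_upwards with η
      rw [neg_neg, mul_comm]
    rw [h1]
    simpa using integral_comp_neg_Iic (0:ℝ) (fun η => 𝓕 ⇑g η * 𝓕 ⇑g (-η))
  rw [← intervalIntegral.integral_Iic_add_Ioi (b := (0:ℝ)) hInt.integrableOn hInt.integrableOn, hsym]
  ring

lemma key_identity (g : SchwartzMap ℝ ℂ) :
    ∫ x : ℝ, g x * Pplus ⇑g x = (2 : ℂ)⁻¹ * ∫ x : ℝ, g x * g x := by
  have h1 : ∫ x : ℝ, g x * Pplus ⇑g x
      = ∫ η in Set.Ioi (0 : ℝ), 𝓕 ⇑g η * 𝓕 ⇑g (-η) := by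
    rw [← fubini_key g (volume.restrict (Set.Ioi 0))
      ((SchwartzMap.fourierTransformCLM ℂ g).integrable.restrict)]
    simp_rw [Pplus_eq]
  have h2 : ∫ x : ℝ, g x * g x = ∫ η : ℝ, 𝓕 ⇑g η * 𝓕 ⇑g (-η) := by
    rw [← fubini_key g volume (SchwartzMap.fourierTransformCLM ℂ g).integrable]
    apply integral_congr_ae
    filter_upwards with x
    rw [← inversion]
  rw [h1, h2, even_split]
  ring

/-- The first generalized energy `E₁(u) = ⟨u, L_u u⟩` equals the momentum
`P(u) = ∫ i u ∂_x conj(u) dx + (β/2)∫|u|⁴ dx` (deep-water case). -/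
theorem energy_eq_momentum (β : ℝ) (u : SchwartzMap ℝ ℂ) :
    (∫ x : ℝ, (starRingEnd ℂ) (u x) * (-Complex.I * deriv (⇑u) x)) +
        (β : ℂ) * ∫ x : ℝ, ((‖u x‖ ^ 2 : ℝ) : ℂ) *
          Pplus (fun y => u y * (starRingEnd ℂ) (u y)) x =
      Complex.I * (∫ x : ℝ, u x * (starRingEnd ℂ) (deriv (⇑u) x)) +
        ((β / 2 : ℝ) : ℂ) * ∫ x : ℝ, ((‖u x‖ ^ 4 : ℝ) : ℂ) := by
  have hg : (fun y => u y * (starRingEnd ℂ) (u y)) = ⇑(absSqS u) := by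
    funext y; rw [absSqS_apply]
  have hnormsq : ∀ x : ℝ, ((‖u x‖ ^ 2 : ℝ) : ℂ) = u x * (starRingEnd ℂ) (u x) := by
    intro x
    rw [Complex.mul_conj, Complex.normSq_eq_norm_sq]
  -- derivative facts
  have hud : ∀ x : ℝ, HasDerivAt (⇑u) (deriv (⇑u) x) x :=
    fun x => u.differentiableAt.hasDerivAt
  have hcd : ∀ x : ℝ, HasDerivAt (fun y => (starRingEnd ℂ) (u y))
      ((starRingEnd ℂ) (deriv (⇑u) x)) x := fun x => (hud x).star
  -- integrability facts
  have hu_int : Integrable (⇑u) := u.integrable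
  have hdu_int : Integrable (deriv (⇑u)) := by
    have : deriv (⇑u) = ⇑(SchwartzMap.derivCLM ℝ ℂ u) := by
      funext x; simp
    rw [this]; exact (SchwartzMap.derivCLM ℝ ℂ u).integrable
  have hu_bdd : ∃ C, ∀ x : ℝ, ‖(starRingEnd ℂ) (u x)‖ ≤ C := by
    refine ⟨SchwartzMap.seminorm ℝ 0 0 u, fun x => ?_⟩
    rw [RCLike.norm_conj]
    exact SchwartzMap.norm_le_seminorm ℝ u x
  have hdu_bdd : ∃ C, ∀ x : ℝ, ‖(starRingEnd ℂ) (deriv (⇑u) x)‖ ≤ C := by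
    refine ⟨SchwartzMap.seminorm ℝ 0 0 (SchwartzMap.derivCLM ℝ ℂ u), fun x => ?_⟩
    rw [RCLike.norm_conj]
    have := SchwartzMap.norm_le_seminorm ℝ (SchwartzMap.derivCLM ℝ ℂ u) x
    simpa using this
  have hcu_meas : AEStronglyMeasurable (fun x : ℝ => (starRingEnd ℂ) (u x)) volume :=
    (Complex.conjCLE.continuous.comp u.continuous).aestronglyMeasurable
  have hcdu_meas : AEStronglyMeasurable (fun x : ℝ => (starRingEnd ℂ) (deriv (⇑u) x)) volume := by
    have : Continuous (deriv (⇑u)) := by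
      have : deriv (⇑u) = ⇑(SchwartzMap.derivCLM ℝ ℂ u) := by funext x; simp
      rw [this]; exact (SchwartzMap.derivCLM ℝ ℂ u).continuous
    exact (Complex.conjCLE.continuous.comp this).aestronglyMeasurable
  have hparts : (∫ x : ℝ, (starRingEnd ℂ) (u x) * deriv (⇑u) x)
      = - ∫ x : ℝ, (starRingEnd ℂ) (deriv (⇑u) x) * u x := by
    apply integral_mul_deriv_eq_deriv_mul_of_integrable (fun x _ => hcd x) (fun x _ => hud x)
    · obtain ⟨C, hC⟩ := hu_bdd; exact hdu_int.bdd_mul hcu_meas (ae_of_all _ hC)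
    · obtain ⟨C, hC⟩ := hdu_bdd; exact hu_int.bdd_mul hcdu_meas (ae_of_all _ hC)
    · obtain ⟨C, hC⟩ := hu_bdd; exact hu_int.bdd_mul hcu_meas (ae_of_all _ hC)
  have t1 : (∫ x : ℝ, (starRingEnd ℂ) (u x) * (-Complex.I * deriv (⇑u) x))
      = Complex.I * ∫ x : ℝ, u x * (starRingEnd ℂ) (deriv (⇑u) x) := by
    have e1 : ∀ x : ℝ, (starRingEnd ℂ) (u x) * (-Complex.I * deriv (⇑u) x)
        = (-Complex.I) * ((starRingEnd ℂ) (u x) * deriv (⇑u) x) := fun x => by ring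
    have e2 : (∫ x : ℝ, u x * (starRingEnd ℂ) (deriv (⇑u) x))
        = ∫ x : ℝ, (starRingEnd ℂ) (deriv (⇑u) x) * u x := by
      apply integral_congr_ae; filter_upwards with x; ring
    simp_rw [e1]
    rw [integral_const_mul, hparts, e2]
    ring
  have t2 : (∫ x : ℝ, ((‖u x‖ ^ 2 : ℝ) : ℂ) *
        Pplus (fun y => u y * (starRingEnd ℂ) (u y)) x)
      = (2 : ℂ)⁻¹ * ∫ x : ℝ, ((‖u x‖ ^ 4 : ℝ) : ℂ) := by
    have e3 : (∫ x : ℝ, ((‖u x‖ ^ 2 : ℝ) : ℂ) *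
          Pplus (fun y => u y * (starRingEnd ℂ) (u y)) x)
        = ∫ x : ℝ, absSqS u x * Pplus (⇑(absSqS u)) x := by
      rw [← hg]
      apply integral_congr_ae; filter_upwards with x
      rw [hnormsq, ← absSqS_apply]
    have e4 : (∫ x : ℝ, absSqS u x * absSqS u x)
        = ∫ x : ℝ, ((‖u x‖ ^ 4 : ℝ) : ℂ) := by
      apply integral_congr_ae; filter_upwards with x
      rw [absSqS_apply, ← hnormsq]
      push_cast
      ring
    rw [e3, key_identity, e4]
  rw [t1, t2]
  push_cast
  ring
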